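/- Let g be a symmetric invertible 4×4 real matrix, let W have Weyl symmetries with respect to g, let S be a symmetric 4×4 real matrix, and let K_{jabc} be defined as in the context. Then: (i) K is symmetric in its last two indices, K_{jabc} = K_{jacb}; and (ii) the array N_{j,cab} := (1/3)(K_{jabc} − K_{jbac}) is antisymmetric in its last two indices (a,b) and satisfies the cyclic identity N_{j,cab} + N_{j,abc} + N_{j,bca} = 0 for all j,a,b,c (equivalently, its total antisymmetrization over (c,a,b) vanishes, so N has the algebraic symmetries of a Lanczos potential). -/

import Mathlib

/-!
Under `b ↔ c` the eight terms of `K_{jabc}` are permuted among themselves: the first two and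
the last two are exchanged, the third and fourth are exchanged by the pair symmetry
`W_{abcd} = W_{cdab}`, the fifth is symmetric because `g` is, and the sixth because the
contraction `S^{de} W_{bdce}` is symmetric in `(b, c)`. Once `K_{jabc}` is symmetric in `(b, c)`,
the cyclic sum of `K_{jabc} − K_{jbac}` over `(c, a, b)` cancels term by term.
-/

open Finset

/-- The tensor `K_{jabc}` built from the Schouten-type tensor `S` and the Weyl-type
tensor `W`. -/
noncomputable def Ktensor (g ginv S : Fin 4 → Fin 4 → ℝ)
    (W : Fin 4 → Fin 4 → Fin 4 → Fin 4 → ℝ) (j a b c : Fin 4) : ℝ :=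
  (∑ d, (∑ e, S c e * ginv e d) * W a b j d)
    + (∑ d, (∑ e, S b e * ginv e d) * W a c j d)
    + (∑ d, (∑ e, S a e * ginv e d) * W b d c j)
    + (∑ d, (∑ e, S a e * ginv e d) * W b j c d)
    - g b c * (∑ d, ∑ e, (∑ p, ∑ q, ginv d p * ginv e q * S p q) * W a d j e)
    - 2 * g a j * (∑ d, ∑ e, (∑ p, ∑ q, ginv d p * ginv e q * S p q) * W b d c e)
    + g a c * (∑ d, ∑ e, (∑ p, ∑ q, ginv d p * ginv e q * S p q) * W b d j e)
    + g a b * (∑ d, ∑ e, (∑ p, ∑ q, ginv d p * ginv e q * S p q) * W c d j e)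

/-- `N_{j,cab} = (1/3)(K_{jabc} − K_{jbac})`, a Lanczos candidate. -/
noncomputable def Ntensor (g ginv S : Fin 4 → Fin 4 → ℝ)
    (W : Fin 4 → Fin 4 → Fin 4 → Fin 4 → ℝ) (j c a b : Fin 4) : ℝ :=
  (1 / 3) * (Ktensor g ginv S W j a b c - Ktensor g ginv S W j b a c)

section Contraction

variable {ι R : Type*} [Fintype ι] [CommSemiring R]

lemma sum_sum_mul_mul_comm_of_symm {A S : ι → ι → R} (hS : ∀ p q, S p q = S q p) (d e : ι) :
    ∑ p, ∑ q, A d p * A e q * S p q = ∑ p, ∑ q, A e p * A d q * S p q := by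
  rw [sum_comm]
  refine sum_congr rfl fun p _ => sum_congr rfl fun q _ => ?_
  rw [hS]
  ring

lemma sum_sum_mul_comm_of_symm_of_pair_symm {T : ι → ι → R} {W : ι → ι → ι → ι → R}
    (hT : ∀ d e, T d e = T e d) (hW : ∀ a b c d, W a b c d = W c d a b) (b c : ι) :
    ∑ d, ∑ e, T d e * W b d c e = ∑ d, ∑ e, T d e * W c d b e := by
  rw [sum_comm]
  exact sum_congr rfl fun e _ => sum_congr rfl fun d _ => by rw [hT, hW]

end Contraction

section Lanczos

variable {g ginv S : Fin 4 → Fin 4 → ℝ} {W : Fin 4 → Fin 4 → Fin 4 → Fin 4 → ℝ}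

lemma Ktensor_comm (hg : ∀ a b, g a b = g b a) (hW : ∀ a b c d, W a b c d = W c d a b)
    (hS : ∀ a b, S a b = S b a) (j a b c : Fin 4) :
    Ktensor g ginv S W j a b c = Ktensor g ginv S W j a c b := by
  have hSW := sum_sum_mul_comm_of_symm_of_pair_symm
    (sum_sum_mul_mul_comm_of_symm (A := ginv) hS) hW b c
  unfold Ktensor
  rw [hSW, hg b c]
  simp only [hW b _ c _]
  ring

lemma Ntensor_antisymm (j c a b : Fin 4) :
    Ntensor g ginv S W j c a b = - Ntensor g ginv S W j c b a := by
  unfold Ntensor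
  ring

lemma Ntensor_cyclic (j : Fin 4)
    (hK : ∀ a b c, Ktensor g ginv S W j a b c = Ktensor g ginv S W j a c b) (a b c : Fin 4) :
    Ntensor g ginv S W j c a b + Ntensor g ginv S W j a b c + Ntensor g ginv S W j b c a = 0 := by
  unfold Ntensor
  rw [hK a b c, hK b c a, hK c a b]
  ring

end Lanczos

theorem Ktensor_symmetry_and_lanczos_candidate_general
    (g ginv : Fin 4 → Fin 4 → ℝ)
    (hg : ∀ a b, g a b = g b a)
    (W : Fin 4 → Fin 4 → Fin 4 → Fin 4 → ℝ)
    (hW3 : ∀ a b c d, W a b c d = W c d a b)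
    (S : Fin 4 → Fin 4 → ℝ)
    (hS : ∀ a b, S a b = S b a)
    (j a b c : Fin 4) :
    Ktensor g ginv S W j a b c = Ktensor g ginv S W j a c b
      ∧ Ntensor g ginv S W j c a b = - Ntensor g ginv S W j c b a
      ∧ Ntensor g ginv S W j c a b + Ntensor g ginv S W j a b c
          + Ntensor g ginv S W j b c a = 0 :=
  ⟨Ktensor_comm hg hW3 hS j a b c, Ntensor_antisymm j c a b,
    Ntensor_cyclic j (Ktensor_comm hg hW3 hS j) a b c⟩

/-- (i) `K_{jabc}` is symmetric in its last two indices;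
(ii) `N_{j,cab} = (1/3)(K_{jabc} − K_{jbac})` is antisymmetric in `(a,b)` and satisfies
the cyclic identity `N_{j,cab} + N_{j,abc} + N_{j,bca} = 0`, i.e. it has the algebraic
symmetries of a Lanczos potential. -/
theorem Ktensor_symmetry_and_lanczos_candidate
    (g ginv : Fin 4 → Fin 4 → ℝ)
    (hg : ∀ a b, g a b = g b a)
    (hginv : ∀ a b, ∑ c, ginv a c * g c b = if a = b then (1 : ℝ) else 0)
    (W : Fin 4 → Fin 4 → Fin 4 → Fin 4 → ℝ)
    (hW1 : ∀ a b c d, W a b c d = - W b a c d)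
    (hW2 : ∀ a b c d, W a b c d = - W a b d c)
    (hW3 : ∀ a b c d, W a b c d = W c d a b)
    (hW4 : ∀ a b c d, W a b c d + W a c d b + W a d b c = 0)
    (hWtr : ∀ b d, ∑ a, ∑ c, ginv a c * W a b c d = 0)
    (S : Fin 4 → Fin 4 → ℝ)
    (hS : ∀ a b, S a b = S b a)
    (j a b c : Fin 4) :
    Ktensor g ginv S W j a b c = Ktensor g ginv S W j a c b
      ∧ Ntensor g ginv S W j c a b = - Ntensor g ginv S W j c b a
      ∧ Ntensor g ginv S W j c a b + Ntensor g ginv S W j a b c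
          + Ntensor g ginv S W j b c a = 0 :=
  Ktensor_symmetry_and_lanczos_candidate_general g ginv hg W hW3 S hS j a b c
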